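/- There exists a constant C₂ > 0 such that for all k = (k₁,k₂,k₃) ∈ ℤ³ with k₃ ≠ 0 and all j ∈ {1,2,3}, one has |M̂ⱼ⁰(k)| ≤ C₂ |k|, where M̂ⱼ⁰ denotes the symbol M̂ⱼ^ν evaluated at ν = 0. -/

import Mathlib

/-- Euclidean norm of a lattice point `k = (k₁, k₂, k₃) ∈ ℤ³`. -/
noncomputable def knorm (k : ℤ × ℤ × ℤ) : ℝ :=
  Real.sqrt (((k.1 : ℝ)) ^ 2 + ((k.2.1 : ℝ)) ^ 2 + ((k.2.2 : ℝ)) ^ 2)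

/-- Denominator `D_ν(k) = |k|²k₃² + (k₂² + ν|k|⁴)²`. -/
noncomputable def Dnu (ν : ℝ) (k : ℤ × ℤ × ℤ) : ℝ :=
  (knorm k) ^ 2 * ((k.2.2 : ℝ)) ^ 2 + (((k.2.1 : ℝ)) ^ 2 + ν * (knorm k) ^ 4) ^ 2

/-- First component of the magnetogeostrophic symbol. -/
noncomputable def Mhat1 (ν : ℝ) (k : ℤ × ℤ × ℤ) : ℝ :=
  ((k.2.1 : ℝ) * (k.2.2 : ℝ) * (knorm k) ^ 2
    - (k.1 : ℝ) * (k.2.2 : ℝ) * (((k.2.1 : ℝ)) ^ 2 + ν * (knorm k) ^ 4)) / Dnu ν k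

/-- Second component of the magnetogeostrophic symbol. -/
noncomputable def Mhat2 (ν : ℝ) (k : ℤ × ℤ × ℤ) : ℝ :=
  (-(k.1 : ℝ) * (k.2.2 : ℝ) * (knorm k) ^ 2
    - (k.2.1 : ℝ) * (k.2.2 : ℝ) * (((k.2.1 : ℝ)) ^ 2 + ν * (knorm k) ^ 4)) / Dnu ν k

/-- Third component of the magnetogeostrophic symbol. -/
noncomputable def Mhat3 (ν : ℝ) (k : ℤ × ℤ × ℤ) : ℝ :=
  (((k.1 : ℝ) ^ 2 + (k.2.1 : ℝ) ^ 2) * (((k.2.1 : ℝ)) ^ 2 + ν * (knorm k) ^ 4)) / Dnu ν k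

/-!
At `ν = 0` write `k = (a, b, c)`, `n = |k|` and `D₀(k) = n²c² + b⁴`. As `c` is a nonzero integer,
`1 ≤ |c| ≤ c²`, so each term `x c y²` with `|x|, |y| ≤ n` in the numerators of `M̂₁⁰` and `M̂₂⁰` is
at most `n³c² ≤ n D₀(k)`. The numerator of `M̂₃⁰` is at most `n²b²`, and by AM-GM
`2 n b² ≤ 2 n |c| b² ≤ n²c² + b⁴`. So `C₂ = 2` works for all three components.
-/

lemma abs_div_le_of_abs_le_mul {x D C : ℝ} (hD : 0 < D) (h : |x| ≤ C * D) : |x / D| ≤ C := by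
  rwa [abs_div, abs_of_pos hD, div_le_iff₀ hD]

lemma abs_mul_mul_sq_le {x y c n : ℝ} (hx : |x| ≤ n) (hy : |y| ≤ n) (hc : 1 ≤ |c|) :
    |x * c * y ^ 2| ≤ n ^ 3 * c ^ 2 := by
  have hn : 0 ≤ n := (abs_nonneg x).trans hx
  rw [abs_mul, abs_mul, abs_pow, ← sq_abs c]
  calc |x| * |c| * |y| ^ 2 ≤ n * |c| * n ^ 2 := by gcongr
    _ ≤ n * |c| ^ 2 * n ^ 2 := by gcongr; exact le_self_pow₀ hc two_ne_zero
    _ = n ^ 3 * |c| ^ 2 := by ring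

lemma two_mul_mul_sq_le_of_one_le_abs {n b c : ℝ} (hn : 0 ≤ n) (hc : 1 ≤ |c|) :
    2 * n * b ^ 2 ≤ n ^ 2 * c ^ 2 + (b ^ 2) ^ 2 :=
  calc 2 * n * b ^ 2 ≤ 2 * (n * |c|) * b ^ 2 := by gcongr; exact le_mul_of_one_le_right hn hc
    _ ≤ (n * |c|) ^ 2 + (b ^ 2) ^ 2 := two_mul_le_add_sq _ _
    _ = n ^ 2 * c ^ 2 + (b ^ 2) ^ 2 := by rw [mul_pow, sq_abs]

section LatticePoint

variable (k : ℤ × ℤ × ℤ)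

lemma knorm_nonneg : 0 ≤ knorm k := Real.sqrt_nonneg _

lemma abs_knorm : |knorm k| = knorm k := abs_of_nonneg (knorm_nonneg k)

lemma sq_knorm : knorm k ^ 2 = (k.1 : ℝ) ^ 2 + (k.2.1 : ℝ) ^ 2 + (k.2.2 : ℝ) ^ 2 :=
  Real.sq_sqrt (by positivity)

lemma abs_fst_le_knorm : |(k.1 : ℝ)| ≤ knorm k :=
  Real.abs_le_sqrt (by nlinarith [sq_nonneg (k.2.1 : ℝ), sq_nonneg (k.2.2 : ℝ)])

lemma abs_snd_fst_le_knorm : |(k.2.1 : ℝ)| ≤ knorm k :=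
  Real.abs_le_sqrt (by nlinarith [sq_nonneg (k.1 : ℝ), sq_nonneg (k.2.2 : ℝ)])

variable {k}

lemma one_le_abs_snd_snd (hk : k.2.2 ≠ 0) : 1 ≤ |(k.2.2 : ℝ)| := by
  exact_mod_cast Int.one_le_abs hk

lemma Dnu_zero : Dnu 0 k = knorm k ^ 2 * (k.2.2 : ℝ) ^ 2 + ((k.2.1 : ℝ) ^ 2) ^ 2 := by
  simp only [Dnu, zero_mul, add_zero]

lemma one_le_knorm (hk : k.2.2 ≠ 0) : 1 ≤ knorm k :=
  (one_le_abs_snd_snd hk).trans <|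
    Real.abs_le_sqrt (by nlinarith [sq_nonneg (k.1 : ℝ), sq_nonneg (k.2.1 : ℝ)])

lemma sq_knorm_mul_sq_le_Dnu_zero : knorm k ^ 2 * (k.2.2 : ℝ) ^ 2 ≤ Dnu 0 k := by
  rw [Dnu_zero]; nlinarith [sq_nonneg ((k.2.1 : ℝ) ^ 2)]

lemma Dnu_zero_pos (hk : k.2.2 ≠ 0) : 0 < Dnu 0 k := by
  have hn : 0 < knorm k := one_pos.trans_le (one_le_knorm hk)
  have hc : (k.2.2 : ℝ) ≠ 0 := by exact_mod_cast hk
  exact lt_of_lt_of_le (by positivity) sq_knorm_mul_sq_le_Dnu_zero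

end LatticePoint

section MhatZero

variable {k : ℤ × ℤ × ℤ}

lemma abs_sub_div_Dnu_zero_le (hk : k.2.2 ≠ 0) {x₁ y₁ x₂ y₂ : ℝ} (hx₁ : |x₁| ≤ knorm k)
    (hy₁ : |y₁| ≤ knorm k) (hx₂ : |x₂| ≤ knorm k) (hy₂ : |y₂| ≤ knorm k) :
    |(x₁ * k.2.2 * y₁ ^ 2 - x₂ * k.2.2 * y₂ ^ 2) / Dnu 0 k| ≤ 2 * knorm k := by
  have hc := one_le_abs_snd_snd hk
  have hD := sq_knorm_mul_sq_le_Dnu_zero (k := k)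
  refine abs_div_le_of_abs_le_mul (Dnu_zero_pos hk) ?_
  calc _ ≤ _ := abs_sub _ _
    _ ≤ knorm k ^ 3 * (k.2.2 : ℝ) ^ 2 + knorm k ^ 3 * (k.2.2 : ℝ) ^ 2 :=
        add_le_add (abs_mul_mul_sq_le hx₁ hy₁ hc) (abs_mul_mul_sq_le hx₂ hy₂ hc)
    _ ≤ 2 * knorm k * Dnu 0 k := by nlinarith [knorm_nonneg k]

lemma abs_Mhat1_zero_le (hk : k.2.2 ≠ 0) : |Mhat1 0 k| ≤ 2 * knorm k := by
  simpa only [Mhat1, zero_mul, add_zero] using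
    abs_sub_div_Dnu_zero_le hk (abs_snd_fst_le_knorm k) (abs_knorm k).le
      (abs_fst_le_knorm k) (abs_snd_fst_le_knorm k)

lemma abs_Mhat2_zero_le (hk : k.2.2 ≠ 0) : |Mhat2 0 k| ≤ 2 * knorm k := by
  simpa only [Mhat2, zero_mul, add_zero] using
    abs_sub_div_Dnu_zero_le hk ((abs_neg _).trans_le (abs_fst_le_knorm k)) (abs_knorm k).le
      (abs_snd_fst_le_knorm k) (abs_snd_fst_le_knorm k)

lemma abs_Mhat3_zero_le (hk : k.2.2 ≠ 0) : |Mhat3 0 k| ≤ 2 * knorm k := by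
  have hn := knorm_nonneg k
  have hamgm := two_mul_mul_sq_le_of_one_le_abs (b := (k.2.1 : ℝ)) hn (one_le_abs_snd_snd hk)
  rw [Mhat3, zero_mul, add_zero]
  refine abs_div_le_of_abs_le_mul (Dnu_zero_pos hk) ?_
  rw [abs_of_nonneg (by positivity), Dnu_zero]
  calc _ ≤ knorm k ^ 2 * (k.2.1 : ℝ) ^ 2 := by
        gcongr; nlinarith [sq_knorm k, sq_nonneg (k.2.2 : ℝ)]
    _ = knorm k / 2 * (2 * knorm k * (k.2.1 : ℝ) ^ 2) := by ring
    _ ≤ knorm k / 2 * (knorm k ^ 2 * (k.2.2 : ℝ) ^ 2 + ((k.2.1 : ℝ) ^ 2) ^ 2) := by gcongr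
    _ ≤ _ := by gcongr; linarith

end MhatZero

theorem stmt1 :
    ∃ C₂ : ℝ, 0 < C₂ ∧ ∀ k : ℤ × ℤ × ℤ, k.2.2 ≠ 0 →
      |Mhat1 0 k| ≤ C₂ * knorm k ∧ |Mhat2 0 k| ≤ C₂ * knorm k ∧
        |Mhat3 0 k| ≤ C₂ * knorm k :=
  ⟨2, two_pos, fun _ hk => ⟨abs_Mhat1_zero_le hk, abs_Mhat2_zero_le hk, abs_Mhat3_zero_le hk⟩⟩
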